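/- Ford–Fulkerson duality: for a finite network G=(V,E,c) with conductances c and the dual-weighted network H=(V,E,r) with r(e)=1/c(e), and disjoint nonempty vertex sets S,T, the product λ(S↔T;G)·λ(S↮T;H) = 1, where λ(S↮T;H) is the extremal length of the family of S–T edge cuts in H. -/

import Mathlib

/-!
Both extremal lengths are computed from the equilibrium potential `u` (`u = 0` on `S`, `u = 1` on
`T`, of least Dirichlet energy `E`): the walks have extremal length `1 / E`, the cuts `E`.

For walks, `ρ = |∇u|` makes every `S`–`T` walk at least `1` long; conversely, for any `ρ` whose
shortest `S`–`T` walk has length `L`, the `ρ`-distance from `S` divided by `L` and truncated at `1`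
competes with `u`, so `L² E ≤ A(ρ)`.

For cuts, `σ = c |∇u|` gives every cut weight at least `E`: by the first variation, `E = ⟨∇u, ∇v⟩`
for the indicator `v` of the vertices that `S` does not reach without crossing the cut.
Conversely, the level sets `{u ≤ s}`, `0 ≤ s < 1`, are cuts whose `σ`-weights average (coarea)
to at most `½ ∑ σ |∇u|`, and Cauchy–Schwarz bounds this by `√(A(σ) E)`.
-/

open Finset MeasureTheory

theorem Fin.sum_succ_sub_castSucc {M : Type*} [AddCommGroup M] :
    ∀ {m : ℕ} (f : Fin (m + 1) → M), ∑ i : Fin m, (f i.succ - f i.castSucc) = f (last m) - f 0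
  | 0, f => by simp
  | m + 1, f => by
    rw [Fin.sum_univ_castSucc]
    simp only [Fin.succ_castSucc]
    rw [Fin.sum_succ_sub_castSucc (fun i => f i.castSucc)]
    simp

theorem Fin.exists_castSucc_mem_and_succ_not_mem {α : Type*} {m : ℕ} (γ : Fin (m + 1) → α)
    {A : Set α} (h0 : γ 0 ∈ A) (hl : γ (last m) ∉ A) :
    ∃ i : Fin m, γ i.castSucc ∈ A ∧ γ i.succ ∉ A := by
  by_contra! h
  exact hl (Fin.induction (motive := fun i => γ i ∈ A) h0 h (last m))

namespace Network

variable {V : Type*}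

def IsWalk (r : V → V → Prop) {m : ℕ} (γ : Fin (m + 1) → V) : Prop :=
  ∀ i : Fin m, r (γ i.castSucc) (γ i.succ)

def walkLength (ρ : V → V → ℝ) {m : ℕ} (γ : Fin (m + 1) → V) : ℝ :=
  ∑ i : Fin m, ρ (γ i.castSucc) (γ i.succ)

section Walk

variable {r : V → V → Prop} {m : ℕ} {γ : Fin (m + 1) → V} {y : V}

theorem IsWalk.snoc (hγ : IsWalk r γ) (hy : r (γ (Fin.last m)) y) :
    IsWalk r (Fin.snoc (α := fun _ => V) γ y) := by
  intro i
  induction i using Fin.lastCases with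
  | last => simpa using hy
  | cast j => rw [Fin.succ_castSucc, Fin.snoc_castSucc, Fin.snoc_castSucc]; exact hγ j

theorem walkLength_snoc (ρ : V → V → ℝ) (γ : Fin (m + 1) → V) (y : V) :
    walkLength ρ (Fin.snoc (α := fun _ => V) γ y) = walkLength ρ γ + ρ (γ (Fin.last m)) y := by
  simp only [walkLength, Fin.sum_univ_castSucc, Fin.succ_last, Fin.snoc_last, Fin.snoc_castSucc]
  congr 1
  exact sum_congr rfl fun i _ => by rw [Fin.succ_castSucc, Fin.snoc_castSucc]

theorem exists_isWalk_of_reflTransGen {x z : V} (h : Relation.ReflTransGen r x z) :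
    ∃ (m : ℕ) (γ : Fin (m + 1) → V), γ 0 = x ∧ γ (Fin.last m) = z ∧ IsWalk r γ := by
  induction h with
  | refl => exact ⟨0, fun _ => x, rfl, rfl, fun i => i.elim0⟩
  | tail _ hyz ih =>
    obtain ⟨m, γ, h0, hl, hγ⟩ := ih
    exact ⟨m + 1, Fin.snoc γ _, by simpa [Fin.snoc_apply_zero] using h0, Fin.snoc_last _ _,
      hγ.snoc (hl ▸ hyz)⟩

end Walk

def grad (u : V → ℝ) : V → V → ℝ := fun x y => u y - u x

def potentials (S T : Set V) : Set (V → ℝ) := {u | (∀ s ∈ S, u s = 0) ∧ ∀ t ∈ T, u t = 1}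

variable (c : V → V → ℝ) (S T : Set V)

def walkLengths (ρ : V → V → ℝ) : Set ℝ :=
  {l | ∃ (m : ℕ) (γ : Fin (m + 1) → V), γ 0 ∈ S ∧ γ (Fin.last m) ∈ T ∧
    IsWalk (fun a b => 0 < c a b) γ ∧ l = walkLength ρ γ}

def IsCut (F : Finset (V × V)) : Prop :=
  ∀ (m : ℕ) (γ : Fin (m + 1) → V), γ 0 ∈ S → γ (Fin.last m) ∈ T →
    IsWalk (fun a b => 0 < c a b) γ → ∃ i : Fin m, (γ i.castSucc, γ i.succ) ∈ F

def cutWeights (ρ : V → V → ℝ) : Set ℝ :=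
  {l | ∃ F : Finset (V × V), (∀ x y, (x, y) ∈ F → (y, x) ∈ F) ∧
    (∀ x y, (x, y) ∈ F → 0 < c x y) ∧ IsCut c S T F ∧ l = (1 / 2) * ∑ p ∈ F, ρ p.1 p.2}

variable {c S T}

theorem nonneg_of_mem_walkLengths {ρ : V → V → ℝ} (hρ : ∀ x y, 0 ≤ ρ x y) {l : ℝ}
    (hl : l ∈ walkLengths c S T ρ) : 0 ≤ l := by
  obtain ⟨m, γ, -, -, -, rfl⟩ := hl
  exact sum_nonneg fun i _ => hρ _ _

theorem walkLengths_nonempty (hconn : ∀ x y, Relation.ReflTransGen (fun a b => 0 < c a b) x y)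
    (hS : S.Nonempty) (hT : T.Nonempty) (ρ : V → V → ℝ) : (walkLengths c S T ρ).Nonempty := by
  obtain ⟨s, hs⟩ := hS
  obtain ⟨t, ht⟩ := hT
  obtain ⟨m, γ, h0, hl, hγ⟩ := exists_isWalk_of_reflTransGen (hconn s t)
  exact ⟨_, m, γ, h0 ▸ hs, hl ▸ ht, hγ, rfl⟩

theorem sInf_walkLengths_singleton_le_add {ρ : V → V → ℝ} (hρ : ∀ x y, 0 ≤ ρ x y) {x y : V}
    (hx : (walkLengths c S {x} ρ).Nonempty) (hxy : 0 < c x y) :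
    sInf (walkLengths c S {y} ρ) ≤ sInf (walkLengths c S {x} ρ) + ρ x y := by
  rw [← sub_le_iff_le_add]
  refine le_csInf hx ?_
  rintro _ ⟨m, γ, h0, hl, hγ, rfl⟩
  rw [Set.mem_singleton_iff] at hl
  rw [sub_le_iff_le_add]
  exact csInf_le ⟨0, fun _ => nonneg_of_mem_walkLengths hρ⟩ ⟨m + 1, Fin.snoc γ y,
    by simpa [Fin.snoc_apply_zero] using h0, Fin.snoc_last _ _, hγ.snoc (hl ▸ hxy),
    by rw [walkLength_snoc, hl]⟩

theorem nonneg_of_mem_cutWeights {σ : V → V → ℝ} (hσ : ∀ x y, 0 ≤ σ x y) {l : ℝ}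
    (hl : l ∈ cutWeights c S T σ) : 0 ≤ l := by
  obtain ⟨F, -, -, -, rfl⟩ := hl
  exact mul_nonneg (by norm_num) (sum_nonneg fun p _ => hσ _ _)

theorem isClosed_potentials : IsClosed (potentials S T) := by
  simp only [potentials, Set.ofPred_and, Set.ofPred_forall]
  exact (isClosed_biInter fun s _ => isClosed_eq (continuous_apply s) continuous_const).inter
    (isClosed_biInter fun t _ => isClosed_eq (continuous_apply t) continuous_const)

variable [Fintype V]

noncomputable section

def energy (w ρ : V → V → ℝ) : ℝ := (1 / 2) * ∑ x, ∑ y, w x y * ρ x y ^ 2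

def dirichletForm (c : V → V → ℝ) (u v : V → ℝ) : ℝ :=
  (1 / 2) * ∑ x, ∑ y, c x y * (grad u x y * grad v x y)

/-- `L ρ` is the least `ρ`-length of a member of the family; metrics vanish off the edges
`c x y ≠ 0`, and `w` weighs their area `energy w ρ`. -/
def extremalLength (c w : V → V → ℝ) (L : (V → V → ℝ) → ℝ) : ℝ :=
  sSup {q | ∃ ρ : V → V → ℝ, (∀ x y, ρ x y = ρ y x) ∧ (∀ x y, 0 ≤ ρ x y) ∧
    (∀ x y, c x y = 0 → ρ x y = 0) ∧ ρ ≠ 0 ∧ q = L ρ ^ 2 / energy w ρ}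

def IsEquilibrium (c : V → V → ℝ) (S T : Set V) (u : V → ℝ) : Prop :=
  u ∈ potentials S T ∧ ∀ v ∈ potentials S T, energy c (grad u) ≤ energy c (grad v)

end

section Energy

variable {w ρ : V → V → ℝ}

theorem energy_nonneg (hw : ∀ x y, 0 ≤ w x y) : 0 ≤ energy w ρ :=
  mul_nonneg (by norm_num) (sum_nonneg fun x _ => sum_nonneg fun y _ =>
    mul_nonneg (hw x y) (sq_nonneg _))

theorem energy_pos (hw : ∀ x y, 0 ≤ w x y) {x y : V} (hxy : 0 < w x y) (hρ : ρ x y ≠ 0) :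
    0 < energy w ρ := by
  have hterm (a b : V) : 0 ≤ w a b * ρ a b ^ 2 := mul_nonneg (hw a b) (sq_nonneg _)
  refine mul_pos (by norm_num) (sum_pos' (fun a _ => sum_nonneg fun b _ => hterm a b)
    ⟨x, mem_univ x, sum_pos' (fun b _ => hterm x b) ⟨y, mem_univ y, ?_⟩⟩)
  exact mul_pos hxy (by positivity)

theorem energy_le_energy (hw : ∀ x y, 0 ≤ w x y) {ρ' : V → V → ℝ}
    (h : ∀ x y, 0 < w x y → |ρ x y| ≤ |ρ' x y|) : energy w ρ ≤ energy w ρ' := by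
  refine mul_le_mul_of_nonneg_left (sum_le_sum fun x _ => sum_le_sum fun y _ => ?_) (by norm_num)
  rcases (hw x y).eq_or_lt with h0 | hpos
  · simp [← h0]
  · exact mul_le_mul_of_nonneg_left (sq_le_sq.2 (h x y hpos)) hpos.le

theorem energy_div_const (w ρ : V → V → ℝ) (a : ℝ) :
    energy w (fun x y => ρ x y / a) = energy w ρ / a ^ 2 := by
  unfold energy
  rw [mul_div_assoc, sum_div]
  congr 1
  refine sum_congr rfl fun x _ => ?_
  rw [sum_div]
  exact sum_congr rfl fun y _ => by ring

end Energy

theorem energy_grad_add_smul (c : V → V → ℝ) (u v : V → ℝ) (ε : ℝ) :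
    energy c (grad (u + ε • v)) =
      energy c (grad u) + 2 * ε * dirichletForm c u v + ε ^ 2 * energy c (grad v) := by
  simp only [energy, dirichletForm, grad, Pi.add_apply, Pi.smul_apply, smul_eq_mul, mul_sum,
    ← sum_add_distrib]
  exact sum_congr rfl fun x _ => sum_congr rfl fun y _ => by ring

theorem dirichletForm_self (c : V → V → ℝ) (u : V → ℝ) :
    dirichletForm c u u = energy c (grad u) := by
  simp only [dirichletForm, energy, sq]

theorem dirichletForm_sub (c : V → V → ℝ) (u v w : V → ℝ) :
    dirichletForm c u (v - w) = dirichletForm c u v - dirichletForm c u w := by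
  simp only [dirichletForm, grad, Pi.sub_apply, ← mul_sub, ← sum_sub_distrib]
  exact congrArg _ (sum_congr rfl fun x _ => sum_congr rfl fun y _ => by ring)

/-- `u + ε • (v - u)` is a potential for every `ε`, so the term of the energy linear in `ε`
vanishes. -/
theorem IsEquilibrium.energy_eq_dirichletForm {u v : V → ℝ} (hu : IsEquilibrium c S T u)
    (hv : v ∈ potentials S T) : energy c (grad u) = dirichletForm c u v := by
  obtain ⟨⟨huS, huT⟩, hmin⟩ := hu
  have hvar (ε : ℝ) : energy c (grad u) ≤ energy c (grad (u + ε • (v - u))) :=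
    hmin _ ⟨fun s hs => by simp [huS s hs, hv.1 s hs], fun t ht => by simp [huT t ht, hv.2 t ht]⟩
  have hdisc := discrim_le_zero (a := energy c (grad (v - u)))
    (b := 2 * dirichletForm c u (v - u)) (c := 0) fun ε => by
      have := hvar ε
      rw [energy_grad_add_smul] at this
      linarith
  have hD : dirichletForm c u (v - u) = 0 := by
    rw [discrim] at hdisc
    nlinarith [sq_nonneg (dirichletForm c u (v - u))]
  rw [dirichletForm_sub, dirichletForm_self, sub_eq_zero] at hD
  exact hD.symm

theorem exists_isEquilibrium (hc : ∀ x y, 0 ≤ c x y) (hST : Disjoint S T) :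
    ∃ u, IsEquilibrium c S T u := by
  classical
  set K := potentials S T ∩ Set.univ.pi fun _ => Set.Icc (0 : ℝ) 1
  have hK : IsCompact K := (isCompact_univ_pi fun _ => isCompact_Icc).inter_left isClosed_potentials
  have hKne : K.Nonempty := by
    refine ⟨T.indicator 1, ⟨fun s hs => Set.indicator_of_notMem (Set.disjoint_left.1 hST hs) _,
      fun t ht => Set.indicator_of_mem ht _⟩, fun x _ => ?_⟩
    by_cases hx : x ∈ T <;> simp [hx]
  have hcont : Continuous fun u : V → ℝ => energy c (grad u) := by
    unfold energy grad
    fun_prop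
  obtain ⟨u, ⟨hu, -⟩, hmin⟩ := hK.exists_isMinOn hKne hcont.continuousOn
  refine ⟨u, hu, fun v hv => ?_⟩
  -- truncating `v` to `[0, 1]` keeps it in `potentials S T` and does not increase the energy
  set v' : V → ℝ := fun x => Set.projIcc 0 1 zero_le_one (v x)
  have hv' : v' ∈ K :=
    ⟨⟨fun s hs => by simp [v', hv.1 s hs], fun t ht => by simp [v', hv.2 t ht]⟩,
      fun x _ => (Set.projIcc 0 1 zero_le_one (v x)).2⟩
  calc energy c (grad u) ≤ energy c (grad v') := hmin hv'
    _ ≤ energy c (grad v) := energy_le_energy hc fun x y _ => Set.abs_projIcc_sub_projIcc _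

theorem extremalLength_eq {w : V → V → ℝ} {L : (V → V → ℝ) → ℝ} {K : ℝ}
    (hle : ∀ ρ : V → V → ℝ, (∀ x y, ρ x y = ρ y x) → (∀ x y, 0 ≤ ρ x y) →
      (∀ x y, c x y = 0 → ρ x y = 0) → ρ ≠ 0 → L ρ ^ 2 / energy w ρ ≤ K)
    (ρ₀ : V → V → ℝ) (h₀sym : ∀ x y, ρ₀ x y = ρ₀ y x) (h₀ : ∀ x y, 0 ≤ ρ₀ x y)
    (h₀c : ∀ x y, c x y = 0 → ρ₀ x y = 0) (h₀ne : ρ₀ ≠ 0) (hK : K ≤ L ρ₀ ^ 2 / energy w ρ₀) :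
    extremalLength c w L = K :=
  IsGreatest.csSup_eq ⟨⟨ρ₀, h₀sym, h₀, h₀c, h₀ne, le_antisymm hK (hle ρ₀ h₀sym h₀ h₀c h₀ne)⟩,
    by rintro _ ⟨ρ, h₁, h₂, h₃, h₄, rfl⟩; exact hle ρ h₁ h₂ h₃ h₄⟩

theorem energy_grad_pos (hc : ∀ x y, 0 ≤ c x y)
    (hconn : ∀ x y, Relation.ReflTransGen (fun a b => 0 < c a b) x y) (hS : S.Nonempty)
    (hT : T.Nonempty) {u : V → ℝ} (hu : u ∈ potentials S T) : 0 < energy c (grad u) := by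
  obtain ⟨_, m, γ, h0, hl, hγ, -⟩ := walkLengths_nonempty hconn hS hT 0
  have hsum : ∑ i : Fin m, (u (γ i.succ) - u (γ i.castSucc)) ≠ 0 := by
    rw [Fin.sum_succ_sub_castSucc fun i => u (γ i)]
    simp [hu.1 _ h0, hu.2 _ hl]
  obtain ⟨i, -, hi⟩ := exists_ne_zero_of_sum_ne_zero hsum
  exact energy_pos hc (hγ i) hi

theorem IsEquilibrium.sq_sInf_walkLengths_mul_energy_le (hsym : ∀ x y, c x y = c y x)
    (hc : ∀ x y, 0 ≤ c x y) (hconn : ∀ x y, Relation.ReflTransGen (fun a b => 0 < c a b) x y)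
    (hS : S.Nonempty) {u : V → ℝ} (hu : IsEquilibrium c S T u) {ρ : V → V → ℝ}
    (hρsym : ∀ x y, ρ x y = ρ y x) (hρ : ∀ x y, 0 ≤ ρ x y) :
    sInf (walkLengths c S T ρ) ^ 2 * energy c (grad u) ≤ energy c ρ := by
  set L := sInf (walkLengths c S T ρ)
  have hbdd (X : Set V) : BddBelow (walkLengths c S X ρ) :=
    ⟨0, fun _ => nonneg_of_mem_walkLengths hρ⟩
  have hL₀ : 0 ≤ L := Real.sInf_nonneg fun _ => nonneg_of_mem_walkLengths hρ
  rcases hL₀.eq_or_lt with hL | hL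
  · rw [← hL, sq, zero_mul, zero_mul]
    exact energy_nonneg hc
  set d : V → ℝ := fun x => sInf (walkLengths c S {x} ρ)
  have hne (x : V) : (walkLengths c S {x} ρ).Nonempty :=
    walkLengths_nonempty hconn hS (Set.singleton_nonempty x) ρ
  have hdS (s : V) (hs : s ∈ S) : d s = 0 :=
    le_antisymm (csInf_le (hbdd _) ⟨0, fun _ => s, hs, rfl, fun i => i.elim0, by simp [walkLength]⟩)
      (Real.sInf_nonneg fun _ => nonneg_of_mem_walkLengths hρ)
  have hdT (t : V) (ht : t ∈ T) : L ≤ d t := by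
    refine le_csInf (hne t) ?_
    rintro _ ⟨m, γ, h0, hl, hγ, rfl⟩
    exact csInf_le (hbdd _) ⟨m, γ, h0, (Set.mem_singleton_iff.1 hl) ▸ ht, hγ, rfl⟩
  have hd (x y : V) (hxy : 0 < c x y) : |d y - d x| ≤ ρ x y := by
    have h₁ := sInf_walkLengths_singleton_le_add hρ (hne x) hxy
    have h₂ := sInf_walkLengths_singleton_le_add hρ (hne y) ((hsym x y) ▸ hxy)
    rw [hρsym y x] at h₂
    exact abs_sub_le_iff.2 ⟨by linarith, by linarith⟩
  set v : V → ℝ := fun x => min (d x / L) 1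
  have hv : v ∈ potentials S T :=
    ⟨fun s hs => by simp [v, hdS s hs], fun t ht => min_eq_right ((one_le_div hL).2 (hdT t ht))⟩
  have hEv : energy c (grad v) ≤ energy c ρ / L ^ 2 := by
    rw [← energy_div_const]
    refine energy_le_energy hc fun x y hxy => ?_
    calc |v y - v x| ≤ |d y / L - d x / L| := by
          simpa using abs_min_sub_min_le_max (d y / L) 1 (d x / L) 1
      _ = |d y - d x| / L := by rw [← sub_div, abs_div, abs_of_pos hL]
      _ ≤ |ρ x y / L| := by
          rw [abs_div, abs_of_pos hL, abs_of_nonneg (hρ x y)]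
          exact div_le_div_of_nonneg_right (hd x y hxy) hL.le
  calc L ^ 2 * energy c (grad u) ≤ L ^ 2 * energy c (grad v) :=
        mul_le_mul_of_nonneg_left (hu.2 v hv) (sq_nonneg L)
    _ ≤ energy c ρ := by
        rwa [le_div_iff₀ (by positivity), mul_comm] at hEv

theorem IsEquilibrium.extremalLength_walks (hsym : ∀ x y, c x y = c y x) (hc : ∀ x y, 0 ≤ c x y)
    (hconn : ∀ x y, Relation.ReflTransGen (fun a b => 0 < c a b) x y)
    (hS : S.Nonempty) (hT : T.Nonempty) {u : V → ℝ} (hu : IsEquilibrium c S T u) :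
    extremalLength c c (fun ρ => sInf (walkLengths c S T ρ)) = 1 / energy c (grad u) := by
  have hE := energy_grad_pos hc hconn hS hT hu.1
  set ρ₀ : V → V → ℝ := fun x y => if 0 < c x y then |u y - u x| else 0
  have hρ₀ : energy c ρ₀ = energy c (grad u) := by
    refine congrArg (_ * ·) (sum_congr rfl fun x _ => sum_congr rfl fun y _ => ?_)
    rcases (hc x y).eq_or_lt with h | h
    · simp [← h]
    · simp [ρ₀, grad, h]
  have hL : 1 ≤ sInf (walkLengths c S T ρ₀) := by
    refine le_csInf (walkLengths_nonempty hconn hS hT ρ₀) ?_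
    rintro _ ⟨m, γ, h0, hl, hγ, rfl⟩
    calc (1 : ℝ) = u (γ (Fin.last m)) - u (γ 0) := by rw [hu.1.2 _ hl, hu.1.1 _ h0]; norm_num
      _ = ∑ i : Fin m, (u (γ i.succ) - u (γ i.castSucc)) :=
          (Fin.sum_succ_sub_castSucc fun i => u (γ i)).symm
      _ ≤ walkLength ρ₀ γ := sum_le_sum fun i _ => by simp [ρ₀, hγ i, le_abs_self]
  refine extremalLength_eq (fun ρ hρsym hρ _ _ => ?_) ρ₀
    (fun x y => by simp [ρ₀, hsym x y, abs_sub_comm]) (fun x y => by positivity)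
    (fun x y h => by simp [ρ₀, h]) (fun h => hE.ne' (by rw [← hρ₀, h]; simp [energy])) ?_
  · refine div_le_of_le_mul₀ (energy_nonneg hc) (by positivity) ?_
    rw [one_div_mul_eq_div, le_div_iff₀ hE]
    exact hu.sq_sInf_walkLengths_mul_energy_le hsym hc hconn hS hρsym hρ
  · rw [hρ₀]
    exact div_le_div_of_nonneg_right (one_le_pow₀ hL) hE.le

theorem IsEquilibrium.energy_le_of_isCut (hsym : ∀ x y, c x y = c y x) (hc : ∀ x y, 0 ≤ c x y)
    {u : V → ℝ} (hu : IsEquilibrium c S T u) {F : Finset (V × V)}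
    (hFsym : ∀ x y, (x, y) ∈ F → (y, x) ∈ F) (hF : IsCut c S T F) :
    energy c (grad u) ≤ (1 / 2) * ∑ p ∈ F, c p.1 p.2 * |u p.2 - u p.1| := by
  classical
  set A : Set V := {x | ∃ s ∈ S, Relation.ReflTransGen (fun a b => 0 < c a b ∧ (a, b) ∉ F) s x}
  have hcross (x y : V) (hxy : 0 < c x y) (hx : x ∈ A) (hy : y ∉ A) : (x, y) ∈ F := by
    by_contra h
    obtain ⟨s, hs, hsx⟩ := hx
    exact hy ⟨s, hs, hsx.tail ⟨hxy, h⟩⟩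
  set v : V → ℝ := fun x => if x ∈ A then 0 else 1
  have hv : v ∈ potentials S T := by
    refine ⟨fun s hs => if_pos ⟨s, hs, .refl⟩, fun t ht => if_neg ?_⟩
    rintro ⟨s, hs, hst⟩
    obtain ⟨m, γ, h0, hl, hγ⟩ := exists_isWalk_of_reflTransGen hst
    obtain ⟨i, hi⟩ := hF m γ (h0 ▸ hs) (hl ▸ ht) fun i => (hγ i).1
    exact (hγ i).2 hi
  have hterm (x y : V) : c x y * (grad u x y * grad v x y) ≤
      if (x, y) ∈ F then c x y * |u y - u x| else 0 := by
    have hrhs : 0 ≤ if (x, y) ∈ F then c x y * |u y - u x| else 0 := by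
      split_ifs
      exacts [mul_nonneg (hc x y) (abs_nonneg _), le_rfl]
    rcases (hc x y).eq_or_lt with h | h
    · simp [← h]
    by_cases hx : x ∈ A <;> by_cases hy : y ∈ A
    · simpa [v, grad, hx, hy] using hrhs
    · simpa [v, grad, hx, hy, hcross x y h hx hy] using
        mul_le_mul_of_nonneg_left (le_abs_self (u y - u x)) h.le
    · simpa [v, grad, hx, hy, hFsym _ _ (hcross y x (hsym x y ▸ h) hy hx)] using
        mul_le_mul_of_nonneg_left ((le_abs_self (u x - u y)).trans_eq (abs_sub_comm _ _)) h.le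
    · simpa [v, grad, hx, hy] using hrhs
  calc energy c (grad u) = dirichletForm c u v := hu.energy_eq_dirichletForm hv
    _ ≤ (1 / 2) * ∑ x, ∑ y, if (x, y) ∈ F then c x y * |u y - u x| else 0 := by
        unfold dirichletForm
        gcongr with x _ y _
        exact hterm x y
    _ = (1 / 2) * ∑ p ∈ F, c p.1 p.2 * |u p.2 - u p.1| := by
        rw [← Fintype.sum_prod_type' fun x y => if (x, y) ∈ F then c x y * |u y - u x| else 0]
        simp only [Prod.mk.eta]
        rw [sum_ite_mem, univ_inter]

theorem isCut_edges (hST : Disjoint S T) : IsCut c S T {p | 0 < c p.1 p.2} := by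
  rintro (_ | m) γ h0 hl hγ
  · exact absurd hl (Set.disjoint_left.1 hST h0)
  · exact ⟨0, by simpa using hγ 0⟩

noncomputable def levelCut (c : V → V → ℝ) (u : V → ℝ) (s : ℝ) : Finset (V × V) :=
  {p | 0 < c p.1 p.2 ∧ s ∈ Set.Ico (min (u p.1) (u p.2)) (max (u p.1) (u p.2))}

theorem mem_levelCut {u : V → ℝ} {s : ℝ} {p : V × V} :
    p ∈ levelCut c u s ↔
      0 < c p.1 p.2 ∧ s ∈ Set.Ico (min (u p.1) (u p.2)) (max (u p.1) (u p.2)) := by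
  simp [levelCut]

theorem isCut_levelCut {u : V → ℝ} (hu : u ∈ potentials S T) {s : ℝ} (hs : s ∈ Set.Ico (0 : ℝ) 1) :
    IsCut c S T (levelCut c u s) := by
  intro m γ h0 hl hγ
  obtain ⟨i, hi, hi'⟩ := Fin.exists_castSucc_mem_and_succ_not_mem γ (A := {x | u x ≤ s})
    (by simpa [hu.1 _ h0] using hs.1) (by simpa [hu.2 _ hl] using hs.2)
  exact ⟨i, mem_levelCut.2 ⟨hγ i, (min_le_left _ _).trans hi,
    (not_le.1 hi').trans_le (le_max_right _ _)⟩⟩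

theorem sInf_cutWeights_le (hsym : ∀ x y, c x y = c y x) {u : V → ℝ} (hu : u ∈ potentials S T)
    {σ : V → V → ℝ} (hσ : ∀ x y, 0 ≤ σ x y) :
    sInf (cutWeights c S T σ) ≤ (1 / 2) * ∑ x, ∑ y, σ x y * |u y - u x| := by
  set I : V × V → Set ℝ := fun p => Set.Ico (min (u p.1) (u p.2)) (max (u p.1) (u p.2))
  set g : ℝ → ℝ := fun s => (1 / 2) * ∑ p : V × V, σ p.1 p.2 * (I p).indicator 1 s
  have hg (s : ℝ) (hs : s ∈ Set.Ico (0 : ℝ) 1) : sInf (cutWeights c S T σ) ≤ g s := by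
    have hsymm (x y : V) (h : (x, y) ∈ levelCut c u s) : (y, x) ∈ levelCut c u s := by
      simpa [mem_levelCut, hsym y x, min_comm, max_comm] using h
    calc sInf (cutWeights c S T σ) ≤ (1 / 2) * ∑ p ∈ levelCut c u s, σ p.1 p.2 :=
          csInf_le ⟨0, fun _ => nonneg_of_mem_cutWeights hσ⟩
            ⟨_, hsymm, fun x y h => (mem_levelCut.1 h).1, isCut_levelCut hu hs, rfl⟩
      _ = (1 / 2) * ∑ p ∈ levelCut c u s, σ p.1 p.2 * (I p).indicator 1 s := by
          refine congrArg _ (sum_congr rfl fun p hp => ?_)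
          rw [Set.indicator_of_mem (mem_levelCut.1 hp).2, Pi.one_apply, mul_one]
      _ ≤ g s := by
          refine mul_le_mul_of_nonneg_left ?_ (by norm_num)
          exact sum_le_sum_of_subset_of_nonneg (subset_univ _) fun p _ _ =>
            mul_nonneg (hσ _ _) (Set.indicator_nonneg (fun _ _ => zero_le_one) _)
  have hind (p : V × V) : Integrable ((I p).indicator (1 : ℝ → ℝ)) :=
    (integrable_indicator_iff measurableSet_Ico).2 (integrableOn_const measure_Ico_lt_top.ne)
  have hint : Integrable g :=
    (integrable_finsetSum _ fun p _ => (hind p).const_mul _).const_mul _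
  calc sInf (cutWeights c S T σ) = ∫ _ in Set.Ico (0 : ℝ) 1, sInf (cutWeights c S T σ) := by simp
    _ ≤ ∫ s in Set.Ico (0 : ℝ) 1, g s :=
        setIntegral_mono_on (integrableOn_const measure_Ico_lt_top.ne) hint.integrableOn
          measurableSet_Ico hg
    _ ≤ ∫ s, g s := setIntegral_le_integral hint (ae_of_all _ fun s =>
        mul_nonneg (by norm_num) (sum_nonneg fun p _ =>
          mul_nonneg (hσ _ _) (Set.indicator_nonneg (fun _ _ => zero_le_one) _)))
    _ = (1 / 2) * ∑ p : V × V, σ p.1 p.2 * |u p.2 - u p.1| := by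
        rw [integral_const_mul, integral_finsetSum]
        · simp only [integral_const_mul, integral_indicator_one measurableSet_Ico,
            Real.volume_real_Ico_of_le min_le_max, max_sub_min_eq_abs, I]
        · exact fun p _ => (hind p).const_mul _
    _ = (1 / 2) * ∑ x, ∑ y, σ x y * |u y - u x| := by
        rw [Fintype.sum_prod_type' fun x y => σ x y * |u y - u x|]

theorem sq_half_sum_mul_abs_grad_le (hc : ∀ x y, 0 ≤ c x y) {σ : V → V → ℝ}
    (hσc : ∀ x y, c x y = 0 → σ x y = 0) (u : V → ℝ) :
    ((1 / 2) * ∑ x, ∑ y, σ x y * |u y - u x|) ^ 2 ≤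
      energy (fun x y => 1 / c x y) σ * energy c (grad u) := by
  have h := sum_sq_le_sum_mul_sum_of_sq_le_mul (univ : Finset (V × V))
    (r := fun p => σ p.1 p.2 * |u p.2 - u p.1|) (f := fun p => 1 / c p.1 p.2 * σ p.1 p.2 ^ 2)
    (g := fun p => c p.1 p.2 * grad u p.1 p.2 ^ 2)
    (fun p _ => mul_nonneg (one_div_nonneg.2 (hc _ _)) (sq_nonneg _))
    (fun p _ => mul_nonneg (hc _ _) (sq_nonneg _)) fun p _ => by
      rcases (hc p.1 p.2).eq_or_lt with h | h
      · simp [hσc _ _ h.symm]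
      · refine le_of_eq ?_
        simp only [grad, mul_pow, sq_abs]
        field_simp
  simp only [Fintype.sum_prod_type] at h
  unfold energy
  calc ((1 / 2) * ∑ x, ∑ y, σ x y * |u y - u x|) ^ 2
      = (1 / 4) * (∑ x, ∑ y, σ x y * |u y - u x|) ^ 2 := by ring
    _ ≤ (1 / 4) * ((∑ x, ∑ y, 1 / c x y * σ x y ^ 2) * ∑ x, ∑ y, c x y * grad u x y ^ 2) := by
        gcongr
    _ = _ := by ring

theorem sq_sInf_cutWeights_le (hsym : ∀ x y, c x y = c y x) (hc : ∀ x y, 0 ≤ c x y)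
    {u : V → ℝ} (hu : u ∈ potentials S T) {σ : V → V → ℝ} (hσ : ∀ x y, 0 ≤ σ x y)
    (hσc : ∀ x y, c x y = 0 → σ x y = 0) :
    sInf (cutWeights c S T σ) ^ 2 ≤ energy (fun x y => 1 / c x y) σ * energy c (grad u) :=
  (pow_le_pow_left₀ (Real.sInf_nonneg fun _ => nonneg_of_mem_cutWeights hσ)
    (sInf_cutWeights_le hsym hu hσ) 2).trans (sq_half_sum_mul_abs_grad_le hc hσc u)

theorem IsEquilibrium.extremalLength_cuts (hsym : ∀ x y, c x y = c y x) (hc : ∀ x y, 0 ≤ c x y)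
    (hconn : ∀ x y, Relation.ReflTransGen (fun a b => 0 < c a b) x y)
    (hS : S.Nonempty) (hT : T.Nonempty) (hST : Disjoint S T) {u : V → ℝ}
    (hu : IsEquilibrium c S T u) :
    extremalLength c (fun x y => 1 / c x y) (fun ρ => sInf (cutWeights c S T ρ)) =
      energy c (grad u) := by
  have hE := energy_grad_pos hc hconn hS hT hu.1
  set σ₀ : V → V → ℝ := fun x y => c x y * |u y - u x|
  have hσ₀ : energy (fun x y => 1 / c x y) σ₀ = energy c (grad u) := by
    refine congrArg (_ * ·) (sum_congr rfl fun x _ => sum_congr rfl fun y _ => ?_)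
    rcases (hc x y).eq_or_lt with h | h
    · simp [σ₀, ← h]
    · simp only [σ₀, grad, mul_pow, sq_abs]
      field_simp
  have hM : energy c (grad u) ≤ sInf (cutWeights c S T σ₀) := by
    refine le_csInf
      ⟨_, _, fun x y h => ?_, fun x y h => (mem_filter.1 h).2, isCut_edges hST, rfl⟩ ?_
    · simpa [hsym y x] using h
    · rintro _ ⟨F, hFsym, -, hF, rfl⟩
      exact hu.energy_le_of_isCut hsym hc hFsym hF
  refine extremalLength_eq (fun σ _ hσ hσc _ => ?_) σ₀
    (fun x y => by simp [σ₀, hsym x y, abs_sub_comm])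
    (fun x y => mul_nonneg (hc x y) (abs_nonneg _)) (fun x y h => by simp [σ₀, h]) (fun h => hE.ne' (by rw [← hσ₀, h]; simp [energy])) ?_
  · refine div_le_of_le_mul₀ (energy_nonneg fun x y => one_div_nonneg.2 (hc x y)) hE.le ?_
    rw [mul_comm]
    exact sq_sInf_cutWeights_le hsym hc hu.1 hσ hσc
  · rw [hσ₀, le_div_iff₀ hE, ← sq]
    exact pow_le_pow_left₀ hE.le hM 2

end Network

open Network

theorem stmt_9_general {V : Type*} [Fintype V]
    (c : V → V → ℝ) (hsym : ∀ x y, c x y = c y x) (hnn : ∀ x y, 0 ≤ c x y)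
    (hconn : ∀ x y : V, Relation.ReflTransGen (fun u v => 0 < c u v) x y)
    (S T : Finset V) (hS : S.Nonempty) (hT : T.Nonempty) (hdisj : Disjoint S T) :
    sSup {q : ℝ | ∃ ρ : V → V → ℝ, (∀ x y, ρ x y = ρ y x) ∧ (∀ x y, 0 ≤ ρ x y) ∧
        (∀ x y, c x y = 0 → ρ x y = 0) ∧ ρ ≠ 0 ∧
        q = (sInf {l : ℝ | ∃ (m : ℕ) (γ : Fin (m+1) → V), γ 0 ∈ S ∧ γ (Fin.last m) ∈ T ∧
              (∀ i : Fin m, 0 < c (γ i.castSucc) (γ i.succ)) ∧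
              l = ∑ i : Fin m, ρ (γ i.castSucc) (γ i.succ)}) ^ 2
            / ((1/2) * ∑ x, ∑ y, c x y * ρ x y ^ 2)} *
    sSup {q : ℝ | ∃ ρ : V → V → ℝ, (∀ x y, ρ x y = ρ y x) ∧ (∀ x y, 0 ≤ ρ x y) ∧
        (∀ x y, c x y = 0 → ρ x y = 0) ∧ ρ ≠ 0 ∧
        q = (sInf {l : ℝ | ∃ F : Finset (V × V),
              (∀ x y : V, (x, y) ∈ F → (y, x) ∈ F) ∧
              (∀ x y : V, (x, y) ∈ F → 0 < c x y) ∧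
              (∀ (m : ℕ) (γ : Fin (m+1) → V), γ 0 ∈ S → γ (Fin.last m) ∈ T →
                (∀ i : Fin m, 0 < c (γ i.castSucc) (γ i.succ)) →
                ∃ i : Fin m, (γ i.castSucc, γ i.succ) ∈ F) ∧
              l = (1/2) * ∑ p ∈ F, ρ p.1 p.2}) ^ 2
            / ((1/2) * ∑ x, ∑ y, (1 / c x y) * ρ x y ^ 2)}
      = 1 := by
  have hS' : (S : Set V).Nonempty := hS
  have hT' : (T : Set V).Nonempty := hT
  have hST : Disjoint (S : Set V) T := Finset.disjoint_coe.2 hdisj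
  obtain ⟨u, hu⟩ := exists_isEquilibrium hnn hST
  change extremalLength c c (fun ρ => sInf (walkLengths c S T ρ)) *
    extremalLength c (fun x y => 1 / c x y) (fun ρ => sInf (cutWeights c S T ρ)) = 1
  rw [hu.extremalLength_walks hsym hnn hconn hS' hT',
    hu.extremalLength_cuts hsym hnn hconn hS' hT' hST]
  exact one_div_mul_cancel (energy_grad_pos hnn hconn hS' hT' hu.1).ne'

/-- Ford–Fulkerson duality: for a finite connected network `G = (V,E,c)` and the
dual-weighted network `H = (V,E,r)` with `r(e) = 1/c(e)`, and disjoint nonempty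
vertex sets `S`, `T`, the extremal length in `G` of the family of `S`–`T` paths
times the extremal length in `H` of the family of `S`–`T` edge cuts equals `1`. -/
theorem stmt_9 {V : Type*} [Fintype V] [DecidableEq V]
    (c : V → V → ℝ) (hsym : ∀ x y, c x y = c y x) (hnn : ∀ x y, 0 ≤ c x y)
    (hconn : ∀ x y : V, Relation.ReflTransGen (fun u v => 0 < c u v) x y)
    (S T : Finset V) (hS : S.Nonempty) (hT : T.Nonempty) (hdisj : Disjoint S T) :
    sSup {q : ℝ | ∃ ρ : V → V → ℝ, (∀ x y, ρ x y = ρ y x) ∧ (∀ x y, 0 ≤ ρ x y) ∧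
        (∀ x y, c x y = 0 → ρ x y = 0) ∧ ρ ≠ 0 ∧
        q = (sInf {l : ℝ | ∃ (m : ℕ) (γ : Fin (m+1) → V), γ 0 ∈ S ∧ γ (Fin.last m) ∈ T ∧
              (∀ i : Fin m, 0 < c (γ i.castSucc) (γ i.succ)) ∧
              l = ∑ i : Fin m, ρ (γ i.castSucc) (γ i.succ)}) ^ 2
            / ((1/2) * ∑ x, ∑ y, c x y * ρ x y ^ 2)} *
    sSup {q : ℝ | ∃ ρ : V → V → ℝ, (∀ x y, ρ x y = ρ y x) ∧ (∀ x y, 0 ≤ ρ x y) ∧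
        (∀ x y, c x y = 0 → ρ x y = 0) ∧ ρ ≠ 0 ∧
        q = (sInf {l : ℝ | ∃ F : Finset (V × V),
              (∀ x y : V, (x, y) ∈ F → (y, x) ∈ F) ∧
              (∀ x y : V, (x, y) ∈ F → 0 < c x y) ∧
              (∀ (m : ℕ) (γ : Fin (m+1) → V), γ 0 ∈ S → γ (Fin.last m) ∈ T →
                (∀ i : Fin m, 0 < c (γ i.castSucc) (γ i.succ)) →
                ∃ i : Fin m, (γ i.castSucc, γ i.succ) ∈ F) ∧
              l = (1/2) * ∑ p ∈ F, ρ p.1 p.2}) ^ 2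
            / ((1/2) * ∑ x, ∑ y, (1 / c x y) * ρ x y ^ 2)}
      = 1 :=
  stmt_9_general c hsym hnn hconn S T hS hT hdisj
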